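/- arXiv:2210.13831 — 11 statements merged into one kernel-verified Lean document; each statement's English description precedes it below -/
import Mathlib

section
/- Let ρ ≥ 0 and let F : ℝ^d ⇉ ℝ^d be a maximally ρ-negatively comonotone set-valued operator. Then the solution set X* = {x ∈ ℝ^d : 0 ∈ F(x)} is convex. -/
open RealInnerProductSpace

/-
Comonotonicity and maximality together say that `u ∈ F x` holds exactly when
`⟪u - v, x - y⟫ ≥ -ρ ‖u - v‖²` for every point `(y, v)` of the graph of `F`. For fixed `u` each of
these conditions is a closed half-space in `x`, so every fibre `{x | u ∈ F x}`, in particular the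
zero set, is an intersection of half-spaces and hence convex.
-/

variable {E : Type*} [NormedAddCommGroup E] [InnerProductSpace ℝ E]

theorem convex_setOf_le_inner_sub (w y : E) (c : ℝ) : Convex ℝ {x : E | c ≤ ⟪w, x - y⟫} := by
  simpa only [inner_sub_right, le_sub_iff_add_le, innerₛₗ_apply_apply] using
    convex_halfSpace_ge (innerₛₗ ℝ w).isLinear (c + ⟪w, y⟫)

theorem setOf_mem_eq_iInter_of_maximal_comonotone (ρ : ℝ) (F : E → Set E)
    (hcomon : ∀ x y u v, u ∈ F x → v ∈ F y → ⟪u - v, x - y⟫ ≥ -ρ * ‖u - v‖ ^ 2)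
    (hmax : ∀ x u, (∀ y v, v ∈ F y → ⟪u - v, x - y⟫ ≥ -ρ * ‖u - v‖ ^ 2) → u ∈ F x) (u : E) :
    {x | u ∈ F x} = ⋂ y, ⋂ v ∈ F y, {x | -ρ * ‖u - v‖ ^ 2 ≤ ⟪u - v, x - y⟫} := by
  ext x
  simp only [Set.mem_ofPred_eq, Set.mem_iInter]
  exact ⟨fun hu y v hv => hcomon x y u v hu hv, hmax x u⟩

theorem convex_setOf_mem_of_maximal_comonotone (ρ : ℝ) (F : E → Set E)
    (hcomon : ∀ x y u v, u ∈ F x → v ∈ F y → ⟪u - v, x - y⟫ ≥ -ρ * ‖u - v‖ ^ 2)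
    (hmax : ∀ x u, (∀ y v, v ∈ F y → ⟪u - v, x - y⟫ ≥ -ρ * ‖u - v‖ ^ 2) → u ∈ F x) (u : E) :
    Convex ℝ {x | u ∈ F x} := by
  rw [setOf_mem_eq_iInter_of_maximal_comonotone ρ F hcomon hmax u]
  exact convex_iInter fun y => convex_iInter₂ fun v _ => convex_setOf_le_inner_sub _ _ _

theorem stmt_2_general {d : ℕ} (ρ : ℝ)
    (F : EuclideanSpace ℝ (Fin d) → Set (EuclideanSpace ℝ (Fin d)))
    (hcomon : ∀ x y u v, u ∈ F x → v ∈ F y → ⟪u - v, x - y⟫ ≥ -ρ * ‖u - v‖ ^ 2)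
    (hmax : ∀ x u, (∀ y v, v ∈ F y → ⟪u - v, x - y⟫ ≥ -ρ * ‖u - v‖ ^ 2) → u ∈ F x) :
    Convex ℝ {x : EuclideanSpace ℝ (Fin d) | (0 : EuclideanSpace ℝ (Fin d)) ∈ F x} :=
  convex_setOf_mem_of_maximal_comonotone ρ F hcomon hmax 0

/-- If `F : ℝ^d ⇉ ℝ^d` is maximally `ρ`-negatively comonotone, then the solution
set `X* = {x : 0 ∈ F x}` is convex. -/
theorem stmt_2 {d : ℕ} (ρ : ℝ) (hρ : 0 ≤ ρ)
    (F : EuclideanSpace ℝ (Fin d) → Set (EuclideanSpace ℝ (Fin d)))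
    (hcomon : ∀ x y u v, u ∈ F x → v ∈ F y → ⟪u - v, x - y⟫ ≥ -ρ * ‖u - v‖ ^ 2)
    (hmax : ∀ x u, (∀ y v, v ∈ F y → ⟪u - v, x - y⟫ ≥ -ρ * ‖u - v‖ ^ 2) → u ∈ F x) :
    Convex ℝ {x : EuclideanSpace ℝ (Fin d) | (0 : EuclideanSpace ℝ (Fin d)) ∈ F x} :=
  stmt_2_general ρ F hcomon hmax
end

section
/- Let ρ ≥ 0, let F : ℝ^d → ℝ^d, let x* ∈ ℝ^d satisfy F(x*) = 0, and suppose F is ρ-star-negatively comonotone with respect to x*. Let γ > 2ρ and let (x^k) be a Proximal Point trajectory with stepsize γ. Then for every N ≥ 1: (1/N) ∑_{k=1}^{N} ‖x^k − x^{k−1}‖² ≤ γ‖x⁰ − x*‖² / ((γ − 2ρ)N). -/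
open RealInnerProductSpace

/-! The squared distance to `x*` is a Lyapunov function for the Proximal Point method: expanding
`x^k − x* = (x^{k+1} − x*) + γ F(x^{k+1})` and applying star-negative comonotonicity at `x^{k+1}`
shows that each step decreases it by at least `(γ − 2ρ)/γ · ‖x^{k+1} − x^k‖²`. Telescoping bounds
the sum of the squared steps by `γ ‖x⁰ − x*‖² / (γ − 2ρ)`. -/

section ProximalPoint

variable {E : Type*} [NormedAddCommGroup E] [InnerProductSpace ℝ E]

/-- Here `v` plays the role of `F(x')` for an implicit step `x' = x − γ F(x')`. -/
lemma proximalPoint_step_descent {x x' xs v : E} {ρ γ : ℝ} (hstep : x' = x - γ • v)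
    (hstar : -ρ * ‖v‖ ^ 2 ≤ ⟪v, x' - xs⟫) :
    (γ - 2 * ρ) * ‖x' - x‖ ^ 2 ≤ γ * (‖x - xs‖ ^ 2 - ‖x' - xs‖ ^ 2) := by
  have hstep_norm : ‖x' - x‖ ^ 2 = γ ^ 2 * ‖v‖ ^ 2 := by
    rw [hstep, sub_sub_cancel_left, norm_neg, norm_smul, mul_pow, Real.norm_eq_abs, sq_abs]
  have hdist : ‖x - xs‖ ^ 2 = ‖x' - xs‖ ^ 2 + 2 * (γ * ⟪v, x' - xs⟫) + γ ^ 2 * ‖v‖ ^ 2 := by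
    have hsplit : x - xs = (x' - xs) + γ • v := by rw [hstep]; abel
    rw [hsplit, norm_add_sq_real, real_inner_smul_right, real_inner_comm, norm_smul, mul_pow,
      Real.norm_eq_abs, sq_abs]
  rw [hstep_norm, hdist]
  nlinarith [mul_le_mul_of_nonneg_left hstar (sq_nonneg γ)]

lemma proximalPoint_sum_descent {F : E → E} {xs : E} {ρ γ : ℝ}
    (hstar : ∀ y, ⟪F y, y - xs⟫ ≥ -ρ * ‖F y‖ ^ 2) {x : ℕ → E}
    (hx : ∀ k, x (k + 1) = x k - γ • F (x (k + 1))) (N : ℕ) :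
    (γ - 2 * ρ) * ∑ k ∈ Finset.range N, ‖x (k + 1) - x k‖ ^ 2 ≤
      γ * (‖x 0 - xs‖ ^ 2 - ‖x N - xs‖ ^ 2) := by
  rw [Finset.mul_sum, ← Finset.sum_range_sub' (fun k => ‖x k - xs‖ ^ 2), Finset.mul_sum]
  exact Finset.sum_le_sum fun k _ => proximalPoint_step_descent (hx k) (hstar _)

end ProximalPoint

theorem stmt_3_general {d : ℕ} (ρ : ℝ) (hρ : 0 ≤ ρ)
    (F : EuclideanSpace ℝ (Fin d) → EuclideanSpace ℝ (Fin d))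
    (xs : EuclideanSpace ℝ (Fin d))
    (hstar : ∀ x, ⟪F x, x - xs⟫ ≥ -ρ * ‖F x‖ ^ 2)
    (γ : ℝ) (hγ : γ > 2 * ρ)
    (x : ℕ → EuclideanSpace ℝ (Fin d))
    (hx : ∀ k : ℕ, x (k + 1) = x k - γ • F (x (k + 1))) :
    ∀ N : ℕ, 1 ≤ N →
      (1 / (N : ℝ)) * ∑ k ∈ Finset.range N, ‖x (k + 1) - x k‖ ^ 2 ≤
        γ * ‖x 0 - xs‖ ^ 2 / ((γ - 2 * ρ) * N) := by
  intro N hN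
  have hN_pos : (0 : ℝ) < N := by exact_mod_cast hN
  have hgap_pos : 0 < γ - 2 * ρ := by linarith
  have hdescent := proximalPoint_sum_descent hstar hx N
  have hbound : (γ - 2 * ρ) * ∑ k ∈ Finset.range N, ‖x (k + 1) - x k‖ ^ 2 ≤
      γ * ‖x 0 - xs‖ ^ 2 := by
    nlinarith [sq_nonneg ‖x N - xs‖]
  rw [le_div_iff₀ (mul_pos hgap_pos hN_pos)]
  calc (1 / (N : ℝ) * ∑ k ∈ Finset.range N, ‖x (k + 1) - x k‖ ^ 2) * ((γ - 2 * ρ) * N)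
      = (γ - 2 * ρ) * ∑ k ∈ Finset.range N, ‖x (k + 1) - x k‖ ^ 2 := by
        field_simp
    _ ≤ γ * ‖x 0 - xs‖ ^ 2 := hbound

/-- Best-iterate `O(1/N)` rate for the Proximal Point method under
`ρ`-star-negative comonotonicity:
`(1/N) ∑_{k=1}^N ‖x^k − x^{k−1}‖² ≤ γ‖x⁰ − x*‖² / ((γ − 2ρ)N)`. -/
theorem stmt_3 {d : ℕ} (ρ : ℝ) (hρ : 0 ≤ ρ)
    (F : EuclideanSpace ℝ (Fin d) → EuclideanSpace ℝ (Fin d))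
    (xs : EuclideanSpace ℝ (Fin d)) (hxs : F xs = 0)
    (hstar : ∀ x, ⟪F x, x - xs⟫ ≥ -ρ * ‖F x‖ ^ 2)
    (γ : ℝ) (hγ : γ > 2 * ρ)
    (x : ℕ → EuclideanSpace ℝ (Fin d))
    (hx : ∀ k : ℕ, x (k + 1) = x k - γ • F (x (k + 1))) :
    ∀ N : ℕ, 1 ≤ N →
      (1 / (N : ℝ)) * ∑ k ∈ Finset.range N, ‖x (k + 1) - x k‖ ^ 2 ≤
        γ * ‖x 0 - xs‖ ^ 2 / ((γ - 2 * ρ) * N) :=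
  stmt_3_general ρ hρ F xs hstar γ hγ x hx
end

section
/- Let ρ ≥ 0, let F : ℝ^d → ℝ^d be ρ-negatively comonotone, let γ > 2ρ, and let (x^k) be a Proximal Point trajectory with stepsize γ. Then for every k ≥ 1: ‖x^{k+1} − x^k‖ ≤ ‖x^k − x^{k−1}‖. -/
/-!
Each Proximal Point step has `x^{k+1} - x^k = -γ F(x^{k+1})`, so it suffices to show
`‖F(x^{k+1})‖ ≤ ‖F(x^k)‖`. Writing `a = F(x^{k+1})`, `b = F(x^k)`, comonotonicity at
`(x^{k+1}, x^k)` reads `γ⟪a - b, a⟫ ≤ ρ‖a - b‖²`, and the polarization identity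
`2⟪a - b, a⟫ = ‖a‖² - ‖b‖² + ‖a - b‖²` turns this into `γ(‖a‖² - ‖b‖²) ≤ (2ρ - γ)‖a - b‖² ≤ 0`.
-/

open RealInnerProductSpace

section

variable {E : Type*} [NormedAddCommGroup E] [InnerProductSpace ℝ E]

theorem norm_le_of_mul_inner_sub_le {a b : E} {ρ γ : ℝ} (hγ : 0 < γ) (hργ : 2 * ρ ≤ γ)
    (h : γ * ⟪a - b, a⟫ ≤ ρ * ‖a - b‖ ^ 2) : ‖a‖ ≤ ‖b‖ := by
  have polarization : 2 * ⟪a - b, a⟫ = ‖a‖ ^ 2 - ‖b‖ ^ 2 + ‖a - b‖ ^ 2 := by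
    rw [inner_sub_left, real_inner_self_eq_norm_sq, norm_sub_sq_real, real_inner_comm]
    ring
  have hsq : γ * (‖a‖ ^ 2 - ‖b‖ ^ 2) ≤ 0 := by
    nlinarith [mul_nonneg (sub_nonneg.2 hργ) (sq_nonneg ‖a - b‖)]
  have hsq_le : ‖a‖ ^ 2 ≤ ‖b‖ ^ 2 := le_of_sub_nonpos (nonpos_of_mul_nonpos_right hsq hγ)
  exact (pow_le_pow_iff_left₀ (norm_nonneg a) (norm_nonneg b) two_ne_zero).1 hsq_le

theorem norm_apply_le_of_eq_sub_smul_apply {F : E → E} {x y : E} {ρ γ : ℝ}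
    (hγ : 0 < γ) (hργ : 2 * ρ ≤ γ)
    (hF : ⟪F y - F x, y - x⟫ ≥ -ρ * ‖F y - F x‖ ^ 2) (hy : y = x - γ • F y) :
    ‖F y‖ ≤ ‖F x‖ := by
  have hstep : y - x = -γ • F y := by
    conv_lhs => rw [hy]
    module
  rw [hstep, inner_smul_right] at hF
  exact norm_le_of_mul_inner_sub_le hγ hργ (by linarith)

end

/-- Monotone decrease of consecutive-iterate distances for the Proximal Point
method under `ρ`-negative comonotonicity with stepsize `γ > 2ρ`. -/
theorem stmt_4 {d : ℕ} (ρ : ℝ) (hρ : 0 ≤ ρ)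
    (F : EuclideanSpace ℝ (Fin d) → EuclideanSpace ℝ (Fin d))
    (hcomon : ∀ x y, ⟪F x - F y, x - y⟫ ≥ -ρ * ‖F x - F y‖ ^ 2)
    (γ : ℝ) (hγ : γ > 2 * ρ)
    (x : ℕ → EuclideanSpace ℝ (Fin d))
    (hx : ∀ k : ℕ, x (k + 1) = x k - γ • F (x (k + 1))) :
    ∀ k : ℕ, 1 ≤ k → ‖x (k + 1) - x k‖ ≤ ‖x k - x (k - 1)‖ := by
  rintro k hk
  obtain ⟨j, rfl⟩ : ∃ j, k = j + 1 := ⟨k - 1, by omega⟩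
  have hγ0 : 0 < γ := by linarith
  have hstep : ∀ i, ‖x (i + 1) - x i‖ = γ * ‖F (x (i + 1))‖ := fun i => by
    conv_lhs => rw [hx i]
    rw [sub_sub_cancel_left, norm_neg, norm_smul_of_nonneg hγ0.le]
  rw [Nat.add_sub_cancel, hstep, hstep]
  exact mul_le_mul_of_nonneg_left
    (norm_apply_le_of_eq_sub_smul_apply hγ0 hγ.le (hcomon _ _) (hx (j + 1))) hγ0.le
end

section
/- Let ρ ≥ 0, let F : ℝ^d → ℝ^d be ρ-negatively comonotone, let x* ∈ ℝ^d satisfy F(x*) = 0, let γ > 2ρ, and let (x^k) be a Proximal Point trajectory with stepsize γ. Then for every N ≥ 1: ‖x^N − x^{N−1}‖² ≤ γ‖x⁰ − x*‖² / ((γ − 2ρ)N). -/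
open RealInnerProductSpace

/-!
Since `F x* = 0`, comonotonicity against `x*` makes each proximal step decrease the squared
distance to `x*` by at least `γ (γ - 2ρ) ‖F x^{k+1}‖²`; summing, the residuals `‖F x^k‖²` have
total at most `‖x⁰ - x*‖² / (γ (γ - 2ρ))`. Comonotonicity between consecutive iterates shows the
residuals are nonincreasing, so the last one is at most the average, and
`x^N - x^{N-1} = -γ F x^N`.
-/

section ProximalPoint

variable {E : Type*} [NormedAddCommGroup E] [InnerProductSpace ℝ E]

def IsNegComonotone (ρ : ℝ) (F : E → E) : Prop :=
  ∀ x y, ⟪F x - F y, x - y⟫ ≥ -ρ * ‖F x - F y‖ ^ 2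

def IsProximalPointTrajectory (F : E → E) (γ : ℝ) (x : ℕ → E) : Prop :=
  ∀ k, x (k + 1) = x k - γ • F (x (k + 1))

variable {ρ γ : ℝ} {F : E → E} {x : ℕ → E}

namespace IsProximalPointTrajectory

theorem sub_succ (hx : IsProximalPointTrajectory F γ x) (k : ℕ) :
    x (k + 1) - x k = -(γ • F (x (k + 1))) := by
  nth_rw 1 [hx k]; abel

theorem norm_sub_sq_add_le (hF : IsNegComonotone ρ F)
    (hx : IsProximalPointTrajectory F γ x) (hγ : 0 ≤ γ) {xs : E} (hxs : F xs = 0) (k : ℕ) :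
    ‖x (k + 1) - xs‖ ^ 2 + γ * (γ - 2 * ρ) * ‖F (x (k + 1))‖ ^ 2 ≤ ‖x k - xs‖ ^ 2 := by
  set g := F (x (k + 1))
  have hinner : ⟪g, x (k + 1) - xs⟫ ≥ -ρ * ‖g‖ ^ 2 := by
    simpa [hxs] using hF (x (k + 1)) xs
  have hexpand : ‖x k - xs‖ ^ 2 =
      ‖x (k + 1) - xs‖ ^ 2 + 2 * (γ * ⟪g, x (k + 1) - xs⟫) + γ ^ 2 * ‖g‖ ^ 2 := by
    have : x k - xs = (x (k + 1) - xs) + γ • g := by rw [hx k]; abel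
    rw [this, norm_add_sq_real, real_inner_smul_right, norm_smul, Real.norm_eq_abs, mul_pow,
      sq_abs, real_inner_comm]
  nlinarith [mul_le_mul_of_nonneg_left hinner.le hγ]

theorem mul_sum_norm_sq_le (hF : IsNegComonotone ρ F)
    (hx : IsProximalPointTrajectory F γ x) (hγ : 0 ≤ γ) {xs : E} (hxs : F xs = 0) (n : ℕ) :
    γ * (γ - 2 * ρ) * ∑ k ∈ Finset.range n, ‖F (x (k + 1))‖ ^ 2
      ≤ ‖x 0 - xs‖ ^ 2 - ‖x n - xs‖ ^ 2 := by
  induction n with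
  | zero => simp
  | succ n ih =>
    rw [Finset.sum_range_succ, mul_add]
    linarith [hx.norm_sub_sq_add_le hF hγ hxs n]

theorem antitone_norm_sq (hF : IsNegComonotone ρ F)
    (hx : IsProximalPointTrajectory F γ x) (hγ : 0 < γ) (hγρ : 2 * ρ ≤ γ) :
    Antitone fun k => ‖F (x (k + 1))‖ ^ 2 := by
  refine antitone_nat_of_succ_le fun k => ?_
  set a := F (x (k + 2))
  set b := F (x (k + 1))
  have hcomon : γ * ⟪a - b, a⟫ ≤ ρ * ‖a - b‖ ^ 2 := by
    have := hF (x (k + 2)) (x (k + 1))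
    rw [hx.sub_succ (k + 1), inner_neg_right, real_inner_smul_right] at this
    linarith
  -- `γ (‖a‖² - ‖b‖²) = 2γ⟨a - b, a⟩ - γ‖a - b‖² ≤ (2ρ - γ) ‖a - b‖² ≤ 0`
  have hexpand : ‖b‖ ^ 2 = ‖a‖ ^ 2 - 2 * ⟪a - b, a⟫ + ‖a - b‖ ^ 2 := by
    rw [norm_sub_sq_real, inner_sub_left, real_inner_self_eq_norm_sq, real_inner_comm]; ring
  have : γ * ‖a‖ ^ 2 ≤ γ * ‖b‖ ^ 2 := by
    nlinarith [mul_le_mul_of_nonneg_right hγρ (sq_nonneg ‖a - b‖)]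
  exact le_of_mul_le_mul_left this hγ

theorem mul_succ_norm_sq_le (hF : IsNegComonotone ρ F)
    (hx : IsProximalPointTrajectory F γ x) (hγ : 0 < γ) (hγρ : 2 * ρ ≤ γ)
    {xs : E} (hxs : F xs = 0) (n : ℕ) :
    γ * (γ - 2 * ρ) * (n + 1) * ‖F (x (n + 1))‖ ^ 2 ≤ ‖x 0 - xs‖ ^ 2 := by
  have hlast : (n + 1 : ℝ) * ‖F (x (n + 1))‖ ^ 2
      ≤ ∑ k ∈ Finset.range (n + 1), ‖F (x (k + 1))‖ ^ 2 := by
    have := Finset.card_nsmul_le_sum (Finset.range (n + 1)) (fun k => ‖F (x (k + 1))‖ ^ 2) _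
      fun k hk => hx.antitone_norm_sq hF hγ hγρ (Finset.mem_range_succ_iff.mp hk)
    simpa using this
  have hsum := hx.mul_sum_norm_sq_le hF hγ.le hxs (n + 1)
  have hpos : 0 ≤ γ * (γ - 2 * ρ) := by nlinarith
  nlinarith [mul_le_mul_of_nonneg_left hlast hpos, sq_nonneg ‖x (n + 1) - xs‖]

end IsProximalPointTrajectory

end ProximalPoint

/-- Last-iterate `O(1/N)` rate for the Proximal Point method under
`ρ`-negative comonotonicity: `‖x^N − x^{N−1}‖² ≤ γ‖x⁰ − x*‖² / ((γ − 2ρ)N)`. -/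
theorem stmt_5 {d : ℕ} (ρ : ℝ) (hρ : 0 ≤ ρ)
    (F : EuclideanSpace ℝ (Fin d) → EuclideanSpace ℝ (Fin d))
    (hcomon : ∀ x y, ⟪F x - F y, x - y⟫ ≥ -ρ * ‖F x - F y‖ ^ 2)
    (xs : EuclideanSpace ℝ (Fin d)) (hxs : F xs = 0)
    (γ : ℝ) (hγ : γ > 2 * ρ)
    (x : ℕ → EuclideanSpace ℝ (Fin d))
    (hx : ∀ k : ℕ, x (k + 1) = x k - γ • F (x (k + 1))) :
    ∀ N : ℕ, 1 ≤ N →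
      ‖x N - x (N - 1)‖ ^ 2 ≤ γ * ‖x 0 - xs‖ ^ 2 / ((γ - 2 * ρ) * N) := by
  rintro N hN
  obtain ⟨n, rfl⟩ := Nat.exists_eq_add_of_le' hN
  have hγ0 : 0 < γ := by linarith
  have hgap : 0 < γ - 2 * ρ := by linarith
  have hbound := IsProximalPointTrajectory.mul_succ_norm_sq_le hcomon hx hγ0 hγ.le hxs n
  have hstep : ‖x (n + 1) - x n‖ ^ 2 = γ ^ 2 * ‖F (x (n + 1))‖ ^ 2 := by
    rw [IsProximalPointTrajectory.sub_succ hx n, norm_neg, norm_smul, Real.norm_eq_abs, mul_pow,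
      sq_abs]
  rw [Nat.add_sub_cancel, hstep, le_div_iff₀ (by positivity)]
  push_cast
  nlinarith
end

section
/- Let ρ ≥ 0, L > 0, let F : ℝ^d → ℝ^d be L-Lipschitz and ρ-star-negatively comonotone with respect to x* with F(x*) = 0, and let (x^k), (x̃^k) be Extragradient iterates with stepsizes γ₁, γ₂ > 0. Then for every k ≥ 0: ‖x^{k+1} − x*‖² ≤ ‖x^k − x*‖² − γ₂(γ₁ − 2ρ − γ₂)‖F(x̃^k)‖² − γ₁γ₂(1 − L²γ₁²)‖F(x^k)‖². -/
/-!
Expanding the square, one Extragradient step gives the exact identity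
`‖x⁺ - x*‖² = ‖x - x*‖² - 2γ₂⟪F x̃, x̃ - x*⟫ + γ₂²‖F x̃‖² - γ₁γ₂(‖F x̃‖² + ‖F x‖² - ‖F x̃ - F x‖²)`,
because `x - x* = (x̃ - x*) + γ₁ F x`. Star-negative comonotonicity at `x̃` bounds the inner
product, and Lipschitz continuity bounds `‖F x̃ - F x‖` by `L γ₁ ‖F x‖`.
-/

open RealInnerProductSpace

variable {E : Type*} [NormedAddCommGroup E] [InnerProductSpace ℝ E]

theorem norm_extragradient_step_sub_sq (x xs g gt : E) (γ₁ γ₂ : ℝ) :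
    ‖x - γ₂ • gt - xs‖ ^ 2 = ‖x - xs‖ ^ 2 - 2 * γ₂ * ⟪gt, x - γ₁ • g - xs⟫ + γ₂ ^ 2 * ‖gt‖ ^ 2
      - γ₁ * γ₂ * (‖gt‖ ^ 2 + ‖g‖ ^ 2 - ‖gt - g‖ ^ 2) := by
  rw [sub_right_comm, norm_sub_sq_real, sub_right_comm, inner_sub_right, norm_sub_sq_real gt g,
    real_inner_smul_right, real_inner_smul_right, real_inner_comm gt, norm_smul,
    Real.norm_eq_abs, mul_pow, sq_abs]
  ring

theorem norm_apply_extrapolate_sub_sq_le {F : E → E} {L : ℝ}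
    (hLip : ∀ x y, ‖F x - F y‖ ≤ L * ‖x - y‖) (x : E) (γ : ℝ) :
    ‖F (x - γ • F x) - F x‖ ^ 2 ≤ L ^ 2 * γ ^ 2 * ‖F x‖ ^ 2 := by
  have h := pow_le_pow_left₀ (norm_nonneg _) (hLip (x - γ • F x) x) 2
  rwa [sub_sub_cancel_left, norm_neg, norm_smul, Real.norm_eq_abs, mul_pow, mul_pow, sq_abs,
    ← mul_assoc] at h

theorem norm_extragradient_step_sub_sq_le {F : E → E} {ρ L γ₁ γ₂ : ℝ} {xs : E}
    (hLip : ∀ x y, ‖F x - F y‖ ≤ L * ‖x - y‖) (hstar : ∀ x, ⟪F x, x - xs⟫ ≥ -ρ * ‖F x‖ ^ 2)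
    (hγ₁ : 0 < γ₁) (hγ₂ : 0 < γ₂) (x : E) :
    ‖x - γ₂ • F (x - γ₁ • F x) - xs‖ ^ 2 ≤ ‖x - xs‖ ^ 2
      - γ₂ * (γ₁ - 2 * ρ - γ₂) * ‖F (x - γ₁ • F x)‖ ^ 2
      - γ₁ * γ₂ * (1 - L ^ 2 * γ₁ ^ 2) * ‖F x‖ ^ 2 := by
  have hcomon := mul_le_mul_of_nonneg_left (hstar (x - γ₁ • F x)).le (by positivity : 0 ≤ 2 * γ₂)
  have hlip := mul_le_mul_of_nonneg_left (norm_apply_extrapolate_sub_sq_le hLip x γ₁)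
    (by positivity : 0 ≤ γ₁ * γ₂)
  rw [norm_extragradient_step_sub_sq x xs (F x) _ γ₁ γ₂]
  linarith

theorem stmt_8_general {d : ℕ} (ρ L : ℝ)
    (F : EuclideanSpace ℝ (Fin d) → EuclideanSpace ℝ (Fin d))
    (hLip : ∀ x y, ‖F x - F y‖ ≤ L * ‖x - y‖)
    (xs : EuclideanSpace ℝ (Fin d))
    (hstar : ∀ x, ⟪F x, x - xs⟫ ≥ -ρ * ‖F x‖ ^ 2)
    (γ₁ γ₂ : ℝ) (hγ₁ : 0 < γ₁) (hγ₂ : 0 < γ₂)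
    (x xt : ℕ → EuclideanSpace ℝ (Fin d))
    (hxt : ∀ k : ℕ, xt k = x k - γ₁ • F (x k))
    (hx : ∀ k : ℕ, x (k + 1) = x k - γ₂ • F (xt k)) :
    ∀ k : ℕ,
      ‖x (k + 1) - xs‖ ^ 2 ≤ ‖x k - xs‖ ^ 2
        - γ₂ * (γ₁ - 2 * ρ - γ₂) * ‖F (xt k)‖ ^ 2
        - γ₁ * γ₂ * (1 - L ^ 2 * γ₁ ^ 2) * ‖F (x k)‖ ^ 2 := by
  intro k
  rw [hx, hxt]
  exact norm_extragradient_step_sub_sq_le hLip hstar hγ₁ hγ₂ (x k)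

/-- Key one-step inequality for Extragradient under `L`-Lipschitzness and
`ρ`-star-negative comonotonicity:
`‖x^{k+1} − x*‖² ≤ ‖x^k − x*‖² − γ₂(γ₁ − 2ρ − γ₂)‖F(x̃^k)‖² − γ₁γ₂(1 − L²γ₁²)‖F(x^k)‖²`. -/
theorem stmt_8 {d : ℕ} (ρ L : ℝ) (hρ : 0 ≤ ρ) (hL : 0 < L)
    (F : EuclideanSpace ℝ (Fin d) → EuclideanSpace ℝ (Fin d))
    (hLip : ∀ x y, ‖F x - F y‖ ≤ L * ‖x - y‖)
    (xs : EuclideanSpace ℝ (Fin d)) (hxs : F xs = 0)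
    (hstar : ∀ x, ⟪F x, x - xs⟫ ≥ -ρ * ‖F x‖ ^ 2)
    (γ₁ γ₂ : ℝ) (hγ₁ : 0 < γ₁) (hγ₂ : 0 < γ₂)
    (x xt : ℕ → EuclideanSpace ℝ (Fin d))
    (hxt : ∀ k : ℕ, xt k = x k - γ₁ • F (x k))
    (hx : ∀ k : ℕ, x (k + 1) = x k - γ₂ • F (xt k)) :
    ∀ k : ℕ,
      ‖x (k + 1) - xs‖ ^ 2 ≤ ‖x k - xs‖ ^ 2
        - γ₂ * (γ₁ - 2 * ρ - γ₂) * ‖F (xt k)‖ ^ 2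
        - γ₁ * γ₂ * (1 - L ^ 2 * γ₁ ^ 2) * ‖F (x k)‖ ^ 2 :=
  stmt_8_general ρ L F hLip xs hstar γ₁ γ₂ hγ₁ hγ₂ x xt hxt hx
end

section
/- Let ρ ≥ 0, L > 0, let F : ℝ^d → ℝ^d be L-Lipschitz and ρ-star-negatively comonotone with respect to x* with F(x*) = 0. If 2ρ < γ₁ < 1/L and 0 < γ₂ ≤ γ₁ − 2ρ, then the Extragradient iterates with stepsizes γ₁, γ₂ satisfy, for every N ≥ 0: (1/(N+1)) ∑_{k=0}^{N} ‖F(x^k)‖² ≤ ‖x⁰ − x*‖² / (γ₁γ₂(1 − L²γ₁²)(N+1)). -/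
/-!
Write `u = x − x*`, `w = F x` and `v = F x̃` for one step. Expanding
`‖x⁺ − x*‖² = ‖u‖² − 2γ₂⟪u, v⟫ + γ₂²‖v‖²`, star-negative comonotonicity at `x̃ = x − γ₁w`
gives `⟪u, v⟫ ≥ −ρ‖v‖² + γ₁⟪v, w⟫`, and Lipschitzness gives `‖v − w‖ ≤ Lγ₁‖w‖`, hence
`2⟪v, w⟫ ≥ ‖v‖² + (1 − L²γ₁²)‖w‖²`. Since `γ₂ ≤ γ₁ − 2ρ`, the term `γ₂²‖v‖²` is absorbed, so
each step decreases `‖x − x*‖²` by at least `γ₁γ₂(1 − L²γ₁²)‖F x‖²`; summing telescopes.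
-/

open RealInnerProductSpace Finset

section

variable {E : Type*} [NormedAddCommGroup E] [InnerProductSpace ℝ E]

lemma norm_sq_add_mul_norm_sq_le_two_mul_inner {v w : E} {K : ℝ} (h : ‖v - w‖ ≤ K * ‖w‖) :
    ‖v‖ ^ 2 + (1 - K ^ 2) * ‖w‖ ^ 2 ≤ 2 * ⟪v, w⟫ := by
  have hsq : ‖v - w‖ ^ 2 ≤ K ^ 2 * ‖w‖ ^ 2 := by
    rw [← mul_pow]; exact pow_le_pow_left₀ (norm_nonneg _) h 2
  nlinarith [norm_sub_sq_real v w]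

theorem extragradient_step_descent {F : E → E} {xs : E} {ρ L γ₁ γ₂ : ℝ}
    (hLip : ∀ x y, ‖F x - F y‖ ≤ L * ‖x - y‖)
    (hstar : ∀ x, -ρ * ‖F x‖ ^ 2 ≤ ⟪F x, x - xs⟫)
    (hγ₁ : 0 ≤ γ₁) (hγ₂ : 0 ≤ γ₂) (hγ : γ₂ ≤ γ₁ - 2 * ρ) (x : E) :
    γ₁ * γ₂ * (1 - L ^ 2 * γ₁ ^ 2) * ‖F x‖ ^ 2 ≤
      ‖x - xs‖ ^ 2 - ‖x - γ₂ • F (x - γ₁ • F x) - xs‖ ^ 2 := by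
  set w := F x
  set v := F (x - γ₁ • w)
  have hnext : ‖x - γ₂ • v - xs‖ ^ 2 = ‖x - xs‖ ^ 2 - 2 * γ₂ * ⟪x - xs, v⟫ + γ₂ ^ 2 * ‖v‖ ^ 2 := by
    rw [sub_right_comm, norm_sub_sq_real, real_inner_smul_right, norm_smul, Real.norm_eq_abs,
      abs_of_nonneg hγ₂]
    ring
  have hcomon : -ρ * ‖v‖ ^ 2 + γ₁ * ⟪v, w⟫ ≤ ⟪x - xs, v⟫ := by
    have h := hstar (x - γ₁ • w)
    rw [sub_right_comm, inner_sub_right, real_inner_smul_right, real_inner_comm (x - xs)] at h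
    linarith
  have hlip : ‖v - w‖ ≤ L * γ₁ * ‖w‖ := by
    have h := hLip (x - γ₁ • w) x
    rwa [sub_sub_cancel_left, norm_neg, norm_smul, Real.norm_eq_abs, abs_of_nonneg hγ₁,
      ← mul_assoc] at h
  have hinner := norm_sq_add_mul_norm_sq_le_two_mul_inner hlip
  rw [hnext]
  nlinarith [mul_nonneg hγ₂ (sub_nonneg.2 hγ), sq_nonneg ‖v‖, mul_nonneg hγ₁ hγ₂]

end

lemma mul_sum_range_le_of_le_sub_succ {a b : ℕ → ℝ} {c : ℝ} (h : ∀ k, c * a k ≤ b k - b (k + 1))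
    (hb : ∀ k, 0 ≤ b k) (n : ℕ) : c * ∑ k ∈ range n, a k ≤ b 0 := by
  calc c * ∑ k ∈ range n, a k ≤ ∑ k ∈ range n, (b k - b (k + 1)) := by
        rw [mul_sum]; exact sum_le_sum fun k _ => h k
    _ = b 0 - b n := sum_range_sub' b n
    _ ≤ b 0 := sub_le_self _ (hb n)

lemma sq_mul_sq_lt_one_of_lt_one_div {L γ : ℝ} (hγ : 0 < γ) (h : γ < 1 / L) :
    L ^ 2 * γ ^ 2 < 1 := by
  have hL : 0 < L := one_div_pos.mp (hγ.trans h)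
  rw [← mul_pow]
  exact pow_lt_one₀ (by positivity) (by rwa [lt_div_iff₀ hL, mul_comm] at h) two_ne_zero

theorem stmt_9_general {d : ℕ} (ρ L : ℝ) (hρ : 0 ≤ ρ)
    (F : EuclideanSpace ℝ (Fin d) → EuclideanSpace ℝ (Fin d))
    (hLip : ∀ x y, ‖F x - F y‖ ≤ L * ‖x - y‖)
    (xs : EuclideanSpace ℝ (Fin d))
    (hstar : ∀ x, ⟪F x, x - xs⟫ ≥ -ρ * ‖F x‖ ^ 2)
    (γ₁ γ₂ : ℝ) (hγ₁u : γ₁ < 1 / L)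
    (hγ₂l : 0 < γ₂) (hγ₂u : γ₂ ≤ γ₁ - 2 * ρ)
    (x xt : ℕ → EuclideanSpace ℝ (Fin d))
    (hxt : ∀ k : ℕ, xt k = x k - γ₁ • F (x k))
    (hx : ∀ k : ℕ, x (k + 1) = x k - γ₂ • F (xt k)) :
    ∀ N : ℕ,
      (1 / ((N : ℝ) + 1)) * ∑ k ∈ Finset.range (N + 1), ‖F (x k)‖ ^ 2 ≤
        ‖x 0 - xs‖ ^ 2 / (γ₁ * γ₂ * (1 - L ^ 2 * γ₁ ^ 2) * ((N : ℝ) + 1)) := by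
  intro N
  have hγ₁ : 0 < γ₁ := by linarith
  have hC : 0 < γ₁ * γ₂ * (1 - L ^ 2 * γ₁ ^ 2) :=
    mul_pos (mul_pos hγ₁ hγ₂l) (sub_pos.2 (sq_mul_sq_lt_one_of_lt_one_div hγ₁ hγ₁u))
  have hsum := mul_sum_range_le_of_le_sub_succ (a := fun k => ‖F (x k)‖ ^ 2)
    (b := fun k => ‖x k - xs‖ ^ 2) (fun k => by
      simpa only [hx k, hxt k] using
        extragradient_step_descent hLip hstar hγ₁.le hγ₂l.le hγ₂u (x k))
    (fun _ => sq_nonneg _) (N + 1)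
  rw [one_div_mul_eq_div, ← div_div,
    div_le_div_iff_of_pos_right (by positivity), le_div_iff₀ hC, mul_comm]
  exact hsum

/-- Best-iterate `O(1/N)` rate for Extragradient under `L`-Lipschitzness and
`ρ`-star-negative comonotonicity, with `2ρ < γ₁ < 1/L` and `0 < γ₂ ≤ γ₁ − 2ρ`:
`(1/(N+1)) ∑_{k=0}^N ‖F(x^k)‖² ≤ ‖x⁰ − x*‖²/(γ₁γ₂(1 − L²γ₁²)(N+1))`. -/
theorem stmt_9 {d : ℕ} (ρ L : ℝ) (hρ : 0 ≤ ρ) (hL : 0 < L)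
    (F : EuclideanSpace ℝ (Fin d) → EuclideanSpace ℝ (Fin d))
    (hLip : ∀ x y, ‖F x - F y‖ ≤ L * ‖x - y‖)
    (xs : EuclideanSpace ℝ (Fin d)) (hxs : F xs = 0)
    (hstar : ∀ x, ⟪F x, x - xs⟫ ≥ -ρ * ‖F x‖ ^ 2)
    (γ₁ γ₂ : ℝ) (hγ₁l : 2 * ρ < γ₁) (hγ₁u : γ₁ < 1 / L)
    (hγ₂l : 0 < γ₂) (hγ₂u : γ₂ ≤ γ₁ - 2 * ρ)
    (x xt : ℕ → EuclideanSpace ℝ (Fin d))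
    (hxt : ∀ k : ℕ, xt k = x k - γ₁ • F (x k))
    (hx : ∀ k : ℕ, x (k + 1) = x k - γ₂ • F (xt k)) :
    ∀ N : ℕ,
      (1 / ((N : ℝ) + 1)) * ∑ k ∈ Finset.range (N + 1), ‖F (x k)‖ ^ 2 ≤
        ‖x 0 - xs‖ ^ 2 / (γ₁ * γ₂ * (1 - L ^ 2 * γ₁ ^ 2) * ((N : ℝ) + 1)) :=
  stmt_9_general ρ L hρ F hLip xs hstar γ₁ γ₂ hγ₁u hγ₂l hγ₂u x xt hxt hx
end

section
/- Let ρ ≥ 0, L > 0, let F : ℝ^d → ℝ^d be L-Lipschitz and ρ-negatively comonotone, and let (x^k), (x̃^k) be Extragradient iterates with equal stepsizes γ₁ = γ₂ = γ > 0. Then for every k ≥ 0: ‖F(x^{k+1})‖² ≤ ‖F(x^k)‖² − (1/2 − 2L²γ²)‖F(x̃^k) − F(x^k)‖² − (1/2 − ρ/γ)‖F(x̃^k) − F(x^{k+1})‖² − (1/2 − 2ρ/γ)‖F(x^k) − F(x^{k+1})‖². In particular, if additionally γ ≤ 1/(2L) and γ ≥ 4ρ, then ‖F(x^{k+1})‖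 ≤ ‖F(x^k)‖ for all k ≥ 0. -/
open RealInnerProductSpace

/-!
Write `a = F xₖ`, `b = F x̃ₖ`, `c = F xₖ₊₁`. The extragradient updates give
`x̃ₖ - xₖ₊₁ = γ (b - a)` and `xₖ - xₖ₊₁ = γ b`, so comonotonicity at the pairs `(x̃ₖ, xₖ₊₁)` and
`(xₖ, xₖ₊₁)` bounds `⟪b - c, b - a⟫` and `⟪a - c, b⟫` from below, and Lipschitz continuity at
`(x̃ₖ, xₖ₊₁)` gives `‖b - c‖ ≤ L γ ‖b - a‖`. A polarization identity expresses `‖a‖² - ‖c‖²`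
through exactly these quantities, which yields the inequality; for `4ρ ≤ γ ≤ 1/(2L)` all three
coefficients are nonnegative.
-/

section

variable {E : Type*} [NormedAddCommGroup E] [InnerProductSpace ℝ E]

theorem norm_sq_sub_norm_sq_eq_three_point (a b c : E) :
    ‖a‖ ^ 2 - ‖c‖ ^ 2 = ‖b - a‖ ^ 2 / 2 - 3 / 2 * ‖b - c‖ ^ 2 + ‖a - c‖ ^ 2 / 2
      + ⟪b - c, b - a⟫ + 2 * ⟪a - c, b⟫ := by
  simp only [norm_sub_sq_real, inner_sub_left, inner_sub_right, real_inner_self_eq_norm_sq,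
    real_inner_comm a b, real_inner_comm a c, real_inner_comm b c]
  ring

theorem extragradient_norm_sq_le {F : E → E} {ρ L γ : ℝ}
    (hLip : ∀ x y, ‖F x - F y‖ ≤ L * ‖x - y‖)
    (hcomon : ∀ x y, ⟪F x - F y, x - y⟫ ≥ -ρ * ‖F x - F y‖ ^ 2) (hγ : 0 < γ)
    {x xt x' : E} (hxt : xt = x - γ • F x) (hx' : x' = x - γ • F xt) :
    ‖F x'‖ ^ 2 ≤ ‖F x‖ ^ 2
      - (1 / 2 - 2 * L ^ 2 * γ ^ 2) * ‖F xt - F x‖ ^ 2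
      - (1 / 2 - ρ / γ) * ‖F xt - F x'‖ ^ 2
      - (1 / 2 - 2 * ρ / γ) * ‖F x - F x'‖ ^ 2 := by
  have hdt : xt - x' = γ • (F xt - F x) := by rw [hx']; nth_rw 1 [hxt]; module
  have hd : x - x' = γ • F xt := by rw [hx']; module
  have comon_t : -(ρ / γ) * ‖F xt - F x'‖ ^ 2 ≤ ⟪F xt - F x', F xt - F x⟫ := by
    have h := hcomon xt x'
    rw [hdt, real_inner_smul_right] at h
    rw [← neg_div, div_mul_eq_mul_div, div_le_iff₀ hγ]
    linarith
  have comon : -(ρ / γ) * ‖F x - F x'‖ ^ 2 ≤ ⟪F x - F x', F xt⟫ := by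
    have h := hcomon x x'
    rw [hd, real_inner_smul_right] at h
    rw [← neg_div, div_mul_eq_mul_div, div_le_iff₀ hγ]
    linarith
  have lip : ‖F xt - F x'‖ ^ 2 ≤ L ^ 2 * γ ^ 2 * ‖F xt - F x‖ ^ 2 := by
    have h := hLip xt x'
    rw [hdt, norm_smul, Real.norm_of_nonneg hγ.le] at h
    calc ‖F xt - F x'‖ ^ 2 ≤ (L * (γ * ‖F xt - F x‖)) ^ 2 := by gcongr
      _ = L ^ 2 * γ ^ 2 * ‖F xt - F x‖ ^ 2 := by ring
  have key := norm_sq_sub_norm_sq_eq_three_point (F x) (F xt) (F x')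
  linear_combination -key + comon_t + 2 * comon + 2 * lip

theorem extragradient_norm_le {F : E → E} {ρ L γ : ℝ}
    (hLip : ∀ x y, ‖F x - F y‖ ≤ L * ‖x - y‖)
    (hcomon : ∀ x y, ⟪F x - F y, x - y⟫ ≥ -ρ * ‖F x - F y‖ ^ 2) (hγ : 0 < γ)
    (hγL : γ ≤ 1 / (2 * L)) (hγρ : 4 * ρ ≤ γ)
    {x xt x' : E} (hxt : xt = x - γ • F x) (hx' : x' = x - γ • F xt) :
    ‖F x'‖ ≤ ‖F x‖ := by
  have hL : 0 < L := by have := one_div_pos.mp (hγ.trans_le hγL); linarith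
  have hLγ : 2 * L * γ ≤ 1 := by rwa [le_div_iff₀ (by positivity), mul_comm] at hγL
  have hργ : 4 * (ρ / γ) ≤ 1 := by rw [← mul_div_assoc, div_le_one hγ]; exact hγρ
  have c₁ : 0 ≤ 1 / 2 - 2 * L ^ 2 * γ ^ 2 := by nlinarith [mul_pos hL hγ]
  have c₂ : 0 ≤ 1 / 2 - ρ / γ := by linarith
  have c₃ : 0 ≤ 1 / 2 - 2 * ρ / γ := by rw [mul_div_assoc]; linarith
  have h := extragradient_norm_sq_le hLip hcomon hγ hxt hx'
  refine (pow_le_pow_iff_left₀ (norm_nonneg _) (norm_nonneg _) two_ne_zero).mp ?_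
  linarith [mul_nonneg c₁ (sq_nonneg ‖F xt - F x‖), mul_nonneg c₂ (sq_nonneg ‖F xt - F x'‖),
    mul_nonneg c₃ (sq_nonneg ‖F x - F x'‖)]

end

theorem stmt_11_general {d : ℕ} (ρ L : ℝ)
    (F : EuclideanSpace ℝ (Fin d) → EuclideanSpace ℝ (Fin d))
    (hLip : ∀ x y, ‖F x - F y‖ ≤ L * ‖x - y‖)
    (hcomon : ∀ x y, ⟪F x - F y, x - y⟫ ≥ -ρ * ‖F x - F y‖ ^ 2)
    (γ : ℝ) (hγ : 0 < γ)
    (x xt : ℕ → EuclideanSpace ℝ (Fin d))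
    (hxt : ∀ k : ℕ, xt k = x k - γ • F (x k))
    (hx : ∀ k : ℕ, x (k + 1) = x k - γ • F (xt k)) :
    (∀ k : ℕ,
      ‖F (x (k + 1))‖ ^ 2 ≤ ‖F (x k)‖ ^ 2
        - (1 / 2 - 2 * L ^ 2 * γ ^ 2) * ‖F (xt k) - F (x k)‖ ^ 2
        - (1 / 2 - ρ / γ) * ‖F (xt k) - F (x (k + 1))‖ ^ 2
        - (1 / 2 - 2 * ρ / γ) * ‖F (x k) - F (x (k + 1))‖ ^ 2) ∧
    (γ ≤ 1 / (2 * L) → 4 * ρ ≤ γ →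
      ∀ k : ℕ, ‖F (x (k + 1))‖ ≤ ‖F (x k)‖) :=
  ⟨fun k => extragradient_norm_sq_le hLip hcomon hγ (hxt k) (hx k),
    fun hγL hγρ k => extragradient_norm_le hLip hcomon hγ hγL hγρ (hxt k) (hx k)⟩

/-- Operator-norm decrease inequality for Extragradient with equal stepsizes
`γ₁ = γ₂ = γ` under `L`-Lipschitzness and `ρ`-negative comonotonicity, together
with the monotone decrease `‖F(x^{k+1})‖ ≤ ‖F(x^k)‖` when `4ρ ≤ γ ≤ 1/(2L)`. -/
theorem stmt_11 {d : ℕ} (ρ L : ℝ) (hρ : 0 ≤ ρ) (hL : 0 < L)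
    (F : EuclideanSpace ℝ (Fin d) → EuclideanSpace ℝ (Fin d))
    (hLip : ∀ x y, ‖F x - F y‖ ≤ L * ‖x - y‖)
    (hcomon : ∀ x y, ⟪F x - F y, x - y⟫ ≥ -ρ * ‖F x - F y‖ ^ 2)
    (γ : ℝ) (hγ : 0 < γ)
    (x xt : ℕ → EuclideanSpace ℝ (Fin d))
    (hxt : ∀ k : ℕ, xt k = x k - γ • F (x k))
    (hx : ∀ k : ℕ, x (k + 1) = x k - γ • F (xt k)) :
    (∀ k : ℕ,
      ‖F (x (k + 1))‖ ^ 2 ≤ ‖F (x k)‖ ^ 2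
        - (1 / 2 - 2 * L ^ 2 * γ ^ 2) * ‖F (xt k) - F (x k)‖ ^ 2
        - (1 / 2 - ρ / γ) * ‖F (xt k) - F (x (k + 1))‖ ^ 2
        - (1 / 2 - 2 * ρ / γ) * ‖F (x k) - F (x (k + 1))‖ ^ 2) ∧
    (γ ≤ 1 / (2 * L) → 4 * ρ ≤ γ →
      ∀ k : ℕ, ‖F (x (k + 1))‖ ≤ ‖F (x k)‖) :=
  stmt_11_general ρ L F hLip hcomon γ hγ x xt hxt hx
end

section
/- Let L > 0, γ₁ > 1/L, γ₂ > 0, and define F : ℝ^d → ℝ^d by F(x) = Lx. Then F is L-Lipschitz and ρ-negatively comonotone for every ρ ≥ 0, and the Extragradient iterates with stepsizes γ₁, γ₂ satisfy x^{k+1} = (1 − Lγ₂ + L²γ₁γ₂)x^k with 1 − Lγ₂ + L²γ₁γ₂ > 1; hence ‖x^{k+1}‖ > ‖x^k‖ whenever x^k ≠ 0, so EG diverges from the unique solution x* = 0 for any x⁰ ≠ 0. -/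
open RealInnerProductSpace

/-!
For `F = L • id` the extragradient step is linear: the extrapolation multiplies `x` by
`1 - Lγ₁`, and the update then gives `x - Lγ₂ (1 - Lγ₁) x = (1 + Lγ₂ (Lγ₁ - 1)) x`. When
`γ₁ > 1/L` the extrapolation overshoots, so this factor exceeds `1` and every nonzero iterate
is pushed away from the solution `0`, although `F` is monotone and hence `ρ`-negatively
comonotone for all `ρ ≥ 0`.
-/

section ScalarOperator

variable {E : Type*} [NormedAddCommGroup E] [InnerProductSpace ℝ E]

theorem norm_smul_sub_smul_le {L : ℝ} (hL : 0 ≤ L) (x y : E) :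
    ‖L • x - L • y‖ ≤ L * ‖x - y‖ := by
  rw [← smul_sub, norm_smul, Real.norm_of_nonneg hL]

theorem neg_mul_norm_sq_le_inner_smul_sub_smul {L ρ : ℝ} (hL : 0 ≤ L) (hρ : 0 ≤ ρ) (x y : E) :
    -ρ * ‖L • x - L • y‖ ^ 2 ≤ ⟪L • x - L • y, x - y⟫ := by
  have hmono : 0 ≤ ⟪L • x - L • y, x - y⟫ := by
    rw [← smul_sub, real_inner_smul_left, real_inner_self_eq_norm_sq]
    positivity
  nlinarith [sq_nonneg ‖L • x - L • y‖]

theorem norm_lt_norm_smul_of_one_lt {c : ℝ} (hc : 1 < c) {x : E} (hx : x ≠ 0) :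
    ‖x‖ < ‖c • x‖ := by
  rw [norm_smul, Real.norm_of_nonneg (by linarith)]
  exact lt_mul_left (norm_pos_iff.mpr hx) hc

end ScalarOperator

theorem extragradient_step_smul {M : Type*} [AddCommGroup M] [Module ℝ M] (L γ₁ γ₂ : ℝ) (x : M) :
    x - γ₂ • L • (x - γ₁ • L • x) = (1 - L * γ₂ + L ^ 2 * γ₁ * γ₂) • x := by
  module

theorem one_lt_extragradient_factor {L γ₁ γ₂ : ℝ} (hL : 0 < L) (hγ₁ : 1 / L < γ₁)
    (hγ₂ : 0 < γ₂) : 1 < 1 - L * γ₂ + L ^ 2 * γ₁ * γ₂ := by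
  have hoverstep : 1 < L * γ₁ := by rwa [div_lt_iff₀' hL] at hγ₁
  nlinarith [mul_pos hL hγ₂]

/-- Counter-example for Extragradient with `γ₁ > 1/L`: for `F(x) = Lx`,
`F` is `L`-Lipschitz and `ρ`-negatively comonotone for every `ρ ≥ 0`, the EG
iterates satisfy `x^{k+1} = (1 − Lγ₂ + L²γ₁γ₂)x^k` with
`1 − Lγ₂ + L²γ₁γ₂ > 1`, and `‖x^{k+1}‖ > ‖x^k‖` whenever `x^k ≠ 0`,
so EG diverges from the unique solution `x* = 0` for any `x⁰ ≠ 0`. -/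
theorem stmt_14 {d : ℕ} (L γ₁ γ₂ : ℝ) (hL : 0 < L)
    (hγ₁ : γ₁ > 1 / L) (hγ₂ : 0 < γ₂)
    (F : EuclideanSpace ℝ (Fin d) → EuclideanSpace ℝ (Fin d))
    (hF : ∀ x, F x = L • x) :
    (∀ x y, ‖F x - F y‖ ≤ L * ‖x - y‖) ∧
    (∀ ρ : ℝ, 0 ≤ ρ → ∀ x y, ⟪F x - F y, x - y⟫ ≥ -ρ * ‖F x - F y‖ ^ 2) ∧
    (1 - L * γ₂ + L ^ 2 * γ₁ * γ₂ > 1) ∧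
    (∀ x xt : ℕ → EuclideanSpace ℝ (Fin d),
      (∀ k : ℕ, xt k = x k - γ₁ • F (x k)) →
      (∀ k : ℕ, x (k + 1) = x k - γ₂ • F (xt k)) →
      ∀ k : ℕ, x (k + 1) = (1 - L * γ₂ + L ^ 2 * γ₁ * γ₂) • x k ∧
        (x k ≠ 0 → ‖x (k + 1)‖ > ‖x k‖)) := by
  have hfactor := one_lt_extragradient_factor hL hγ₁ hγ₂
  simp only [hF]
  refine ⟨norm_smul_sub_smul_le hL.le,
    fun ρ hρ => neg_mul_norm_sq_le_inner_smul_sub_smul hL.le hρ, hfactor, ?_⟩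
  intro x xt hxt hx k
  have hstep : x (k + 1) = (1 - L * γ₂ + L ^ 2 * γ₁ * γ₂) • x k := by
    rw [hx k, hxt k, extragradient_step_smul]
  exact ⟨hstep, fun hne => hstep ▸ norm_lt_norm_smul_of_one_lt hfactor hne⟩
end

section
/- Let ρ ≥ 0, let F : ℝ^d → ℝ^d be ρ-star-negatively comonotone with respect to x* with F(x*) = 0, and let (x^k), (x̃^k) be Optimistic Gradient iterates with stepsizes γ₁, γ₂ > 0. Then for every k ≥ 1: ‖x^{k+1} − x*‖² ≤ ‖x^k − x*‖² − γ₂(γ₁ − 2ρ − γ₂)‖F(x̃^k)‖² − γ₁γ₂‖F(x̃^{k−1})‖² + γ₁γ₂‖F(x̃^k) − F(x̃^{k−1})‖². -/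
open RealInnerProductSpace

/-! With `a = x^k − x*`, the update gives `x^{k+1} − x* = a − γ₂ F(x̃^k)` and the extrapolation
gives `x̃^k − x* = a − γ₁ F(x̃^{k−1})`. Expanding `‖a − γ₂ F(x̃^k)‖²` and `‖F(x̃^k) − F(x̃^{k−1})‖²`,
the claimed inequality is exactly `γ₂` times star-negative comonotonicity at `x̃^k`. -/

theorem norm_sub_smul_sq_le_of_inner_ge {E : Type*} [NormedAddCommGroup E]
    [InnerProductSpace ℝ E] {ρ γ₁ γ₂ : ℝ} (hγ₂ : 0 ≤ γ₂) {a f g : E}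
    (h : ⟪f, a - γ₁ • g⟫ ≥ -ρ * ‖f‖ ^ 2) :
    ‖a - γ₂ • f‖ ^ 2 ≤ ‖a‖ ^ 2 - γ₂ * (γ₁ - 2 * ρ - γ₂) * ‖f‖ ^ 2
      - γ₁ * γ₂ * ‖g‖ ^ 2 + γ₁ * γ₂ * ‖f - g‖ ^ 2 := by
  rw [inner_sub_right, real_inner_smul_right] at h
  have hstep : ‖a - γ₂ • f‖ ^ 2 = ‖a‖ ^ 2 - 2 * γ₂ * ⟪f, a⟫ + γ₂ ^ 2 * ‖f‖ ^ 2 := by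
    rw [norm_sub_sq_real, real_inner_smul_right, norm_smul, mul_pow, Real.norm_eq_abs, sq_abs,
      real_inner_comm]
    ring
  rw [hstep, norm_sub_sq_real]
  linear_combination 2 * mul_le_mul_of_nonneg_left h hγ₂

theorem stmt_16_general {d : ℕ} (ρ : ℝ)
    (F : EuclideanSpace ℝ (Fin d) → EuclideanSpace ℝ (Fin d))
    (xs : EuclideanSpace ℝ (Fin d))
    (hstar : ∀ x, ⟪F x, x - xs⟫ ≥ -ρ * ‖F x‖ ^ 2)
    (γ₁ γ₂ : ℝ) (hγ₂ : 0 < γ₂)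
    (x xt : ℕ → EuclideanSpace ℝ (Fin d))
    (hxt : ∀ k : ℕ, xt (k + 1) = x (k + 1) - γ₁ • F (xt k))
    (hx : ∀ k : ℕ, x (k + 1) = x k - γ₂ • F (xt k)) :
    ∀ k : ℕ, 1 ≤ k →
      ‖x (k + 1) - xs‖ ^ 2 ≤ ‖x k - xs‖ ^ 2
        - γ₂ * (γ₁ - 2 * ρ - γ₂) * ‖F (xt k)‖ ^ 2
        - γ₁ * γ₂ * ‖F (xt (k - 1))‖ ^ 2
        + γ₁ * γ₂ * ‖F (xt k) - F (xt (k - 1))‖ ^ 2 := by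
  intro k hk
  obtain ⟨m, rfl⟩ := Nat.exists_eq_add_of_le' hk
  have hextra : xt (m + 1) - xs = x (m + 1) - xs - γ₁ • F (xt m) := by
    rw [hxt m]; abel
  have hcomon := hstar (xt (m + 1))
  rw [hextra] at hcomon
  rw [Nat.add_sub_cancel, hx (m + 1), sub_right_comm]
  exact norm_sub_smul_sq_le_of_inner_ge hγ₂.le hcomon

/-- Key one-step inequality for Optimistic Gradient under
`ρ`-star-negative comonotonicity: for all `k ≥ 1`,
`‖x^{k+1} − x*‖² ≤ ‖x^k − x*‖² − γ₂(γ₁ − 2ρ − γ₂)‖F(x̃^k)‖²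
  − γ₁γ₂‖F(x̃^{k−1})‖² + γ₁γ₂‖F(x̃^k) − F(x̃^{k−1})‖²`. -/
theorem stmt_16 {d : ℕ} (ρ : ℝ) (hρ : 0 ≤ ρ)
    (F : EuclideanSpace ℝ (Fin d) → EuclideanSpace ℝ (Fin d))
    (xs : EuclideanSpace ℝ (Fin d)) (hxs : F xs = 0)
    (hstar : ∀ x, ⟪F x, x - xs⟫ ≥ -ρ * ‖F x‖ ^ 2)
    (γ₁ γ₂ : ℝ) (hγ₁ : 0 < γ₁) (hγ₂ : 0 < γ₂)
    (x xt : ℕ → EuclideanSpace ℝ (Fin d))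
    (hxt0 : xt 0 = x 0)
    (hxt : ∀ k : ℕ, xt (k + 1) = x (k + 1) - γ₁ • F (xt k))
    (hx : ∀ k : ℕ, x (k + 1) = x k - γ₂ • F (xt k)) :
    ∀ k : ℕ, 1 ≤ k →
      ‖x (k + 1) - xs‖ ^ 2 ≤ ‖x k - xs‖ ^ 2
        - γ₂ * (γ₁ - 2 * ρ - γ₂) * ‖F (xt k)‖ ^ 2
        - γ₁ * γ₂ * ‖F (xt (k - 1))‖ ^ 2
        + γ₁ * γ₂ * ‖F (xt k) - F (xt (k - 1))‖ ^ 2 :=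
  stmt_16_general ρ F xs hstar γ₁ γ₂ hγ₂ x xt hxt hx
end

section
/- Let ρ ≥ 0, L > 0, let F : ℝ^d → ℝ^d be L-Lipschitz and ρ-star-negatively comonotone with respect to x* with F(x*) = 0, and suppose ρ < 1/(2L), 2ρ < γ₁ < 1/L, and 0 < γ₂ < min{1/L − γ₁, γ₁ − 2ρ}. Then the Optimistic Gradient iterates with stepsizes γ₁, γ₂ satisfy, for every N ≥ 0: (1/(N+1)) ∑_{k=0}^{N} ‖F(x̃^k)‖² ≤ ‖x⁰ − x*‖² / (γ₁γ₂(1 − L²(γ₁ + γ₂)²)(N+1)). -/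
/-!
Write `gₖ = F x̃ᵏ⁻¹` (with `g₀ = 0`), `rₖ = ‖xᵏ - x*‖²`, `nₖ = ‖gₖ‖²` and `δₖ = ‖gₖ₊₁ - gₖ‖²`.
Star-negative comonotonicity at `x̃ᵏ` and `γ₂ ≤ γ₁ - 2ρ` give `rₖ₊₁ ≤ rₖ + γ₁γ₂ (δₖ - nₖ)`;
Lipschitz continuity applied to `x̃ᵏ⁺¹ - x̃ᵏ = -((γ₁ + γ₂) gₖ₊₁ - γ₁ gₖ)` bounds `δₖ₊₁` by
`L² (γ₂(γ₁ + γ₂) nₖ₊₁ - γ₁γ₂ nₖ + γ₁(γ₁ + γ₂) δₖ)`. For `τ = γ₁γ₂ / (1 - γ₁(γ₁ + γ₂)L²)` the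
potential `rₖ₊₁ + (τ - γ₁γ₂) δₖ + (γ₁γ₂ - τγ₂(γ₁ + γ₂)L²) nₖ` is nonnegative and drops by
`(γ₁γ₂ - τγ₂²L²) nₖ` at each step, so telescoping and `δ₀ ≤ L² r₀` bound `∑ nₖ`.
-/

open Finset RealInnerProductSpace

theorem sum_range_le_of_add_le {V c : ℕ → ℝ} (hV : ∀ k, 0 ≤ V k)
    (hstep : ∀ k, V (k + 1) + c k ≤ V k) (M : ℕ) :
    ∑ k ∈ range M, c k ≤ V 0 :=
  calc ∑ k ∈ range M, c k ≤ ∑ k ∈ range M, (V k - V (k + 1)) :=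
        sum_le_sum fun k _ => by linarith [hstep k]
    _ = V 0 - V M := sum_range_sub' V M
    _ ≤ V 0 := by linarith [hV M]

theorem og_constant_le {a b L τ : ℝ} (ha : 0 ≤ a) (hb : 0 ≤ b)
    (hu : L ^ 2 * (a + b) ^ 2 ≤ 1) (hA : 0 < 1 - a * (a + b) * L ^ 2)
    (hτ : τ * (1 - a * (a + b) * L ^ 2) = a * b) :
    a * b * (1 - L ^ 2 * (a + b) ^ 2) * (1 + τ * L ^ 2) ≤ a * b - τ * b ^ 2 * L ^ 2 := by
  have hprod : 0 ≤ a ^ 2 * b * (a + b) * L ^ 2 *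
      (1 - L ^ 2 * (a + b) ^ 2 + b * (a + b) * L ^ 2) := by
    have := sub_nonneg.mpr hu
    positivity
  have hid : (a * b - τ * b ^ 2 * L ^ 2 - a * b * (1 - L ^ 2 * (a + b) ^ 2) * (1 + τ * L ^ 2))
      * (1 - a * (a + b) * L ^ 2) =
      a ^ 2 * b * (a + b) * L ^ 2 * (1 - L ^ 2 * (a + b) ^ 2 + b * (a + b) * L ^ 2) := by
    linear_combination (-(b ^ 2 * L ^ 2) - a * b * (1 - L ^ 2 * (a + b) ^ 2) * L ^ 2) * hτ
  rw [← hid] at hprod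
  linarith [(mul_nonneg_iff_of_pos_right hA).mp hprod]

theorem mul_sum_range_le_of_og_recursion {a b L : ℝ} {r n δ : ℕ → ℝ} (ha : 0 ≤ a) (hb : 0 ≤ b)
    (hu : L ^ 2 * (a + b) ^ 2 < 1)
    (hr_nonneg : ∀ k, 0 ≤ r k) (hn_nonneg : ∀ k, 0 ≤ n k) (hδ_nonneg : ∀ k, 0 ≤ δ k)
    (hr : ∀ k, r (k + 1) ≤ r k + a * b * (δ k - n k))
    (hδ : ∀ k, δ (k + 1) ≤
      L ^ 2 * (b * (a + b) * n (k + 1) - a * b * n k + a * (a + b) * δ k))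
    (hδr : δ 0 ≤ L ^ 2 * r 0) (M : ℕ) :
    a * b * (1 - L ^ 2 * (a + b) ^ 2) * ∑ k ∈ range M, n k ≤ r 0 := by
  have hbL : 0 ≤ b * (a + b) * L ^ 2 := by positivity
  have hA : 0 < 1 - a * (a + b) * L ^ 2 := by linear_combination hu + hbL
  obtain ⟨τ, hτ0, hτ⟩ : ∃ τ, 0 ≤ τ ∧ τ * (1 - a * (a + b) * L ^ 2) = a * b :=
    ⟨a * b / (1 - a * (a + b) * L ^ 2), by positivity, div_mul_cancel₀ _ hA.ne'⟩
  have hθ : 0 ≤ a * b - τ * b * (a + b) * L ^ 2 := by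
    have := mul_le_mul_of_nonneg_left
      (show b * (a + b) * L ^ 2 ≤ 1 - a * (a + b) * L ^ 2 by linear_combination hu.le) hτ0
    linarith
  set V : ℕ → ℝ := fun k =>
    r (k + 1) + τ * (a * (a + b) * L ^ 2) * δ k + (a * b - τ * b * (a + b) * L ^ 2) * n k
  have hV_nonneg : ∀ k, 0 ≤ V k := fun k => by
    have := hδ_nonneg k; have := hn_nonneg k; have := hr_nonneg (k + 1)
    positivity
  have hV_succ : ∀ k, V (k + 1) + (a * b - τ * b ^ 2 * L ^ 2) * n k ≤ V k := fun k => by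
    have hτδ := mul_le_mul_of_nonneg_left (hδ k) hτ0
    simp only [V]
    linear_combination hr (k + 1) + hτδ - δ (k + 1) * hτ
  have hV_zero : V 0 ≤ (1 + τ * L ^ 2) * r 0 := by
    have hτδ := mul_le_mul_of_nonneg_left hδr hτ0
    have hτn : 0 ≤ τ * (b * (a + b) * L ^ 2) * n 0 := by have := hn_nonneg 0; positivity
    simp only [V]
    linear_combination hr 0 + hτδ + hτn - δ 0 * hτ
  have hsum := sum_range_le_of_add_le hV_nonneg hV_succ M
  rw [← mul_sum] at hsum
  have hsum_nonneg : 0 ≤ ∑ k ∈ range M, n k := sum_nonneg fun k _ => hn_nonneg k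
  refine le_of_mul_le_mul_left ?_ (by positivity : 0 < 1 + τ * L ^ 2)
  linear_combination mul_le_mul_of_nonneg_right (og_constant_le ha hb hu.le hA hτ) hsum_nonneg
    + hsum + hV_zero

variable {E : Type*} [NormedAddCommGroup E] [InnerProductSpace ℝ E]

theorem norm_smul_sub_smul_sq (s t : ℝ) (g h : E) :
    ‖s • g - t • h‖ ^ 2 = s * (s - t) * ‖g‖ ^ 2 + t * (t - s) * ‖h‖ ^ 2 + s * t * ‖g - h‖ ^ 2 := by
  rw [norm_sub_sq_real, norm_sub_sq_real, norm_smul, norm_smul, real_inner_smul_left,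
    real_inner_smul_right, mul_pow, mul_pow, Real.norm_eq_abs, Real.norm_eq_abs, sq_abs, sq_abs]
  ring

theorem norm_sub_smul_sq_le_of_inner_ge_s17 {ρ a b : ℝ} {y g h : E} (hb : 0 ≤ b)
    (hab : 2 * ρ + b ≤ a) (hg : ⟪g, y - a • h⟫ ≥ -ρ * ‖g‖ ^ 2) :
    ‖y - b • g‖ ^ 2 ≤ ‖y‖ ^ 2 + a * b * (‖g - h‖ ^ 2 - ‖h‖ ^ 2) := by
  rw [inner_sub_right, real_inner_smul_right] at hg
  rw [norm_sub_sq_real, norm_sub_sq_real g h, real_inner_smul_right, norm_smul, mul_pow,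
    Real.norm_eq_abs, sq_abs, real_inner_comm]
  have hslack : 0 ≤ b * (a - 2 * ρ - b) * ‖g‖ ^ 2 := by
    have : 0 ≤ a - 2 * ρ - b := by linarith
    positivity
  nlinarith [mul_le_mul_of_nonneg_left hg (by linarith : (0 : ℝ) ≤ 2 * b)]

structure IsOptimisticGradient (F : E → E) (γ₁ γ₂ : ℝ) (x xt : ℕ → E) : Prop where
  xt_zero : xt 0 = x 0
  xt_succ : ∀ k, xt (k + 1) = x (k + 1) - γ₁ • F (xt k)
  x_succ : ∀ k, x (k + 1) = x k - γ₂ • F (xt k)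

/-- `prevEval F xt k` is `F x̃ᵏ⁻¹`, with the convention `F x̃⁻¹ = 0`, under which
`x̃ᵏ = xᵏ - γ₁ F x̃ᵏ⁻¹` holds also for `k = 0`. -/
def prevEval (F : E → E) (xt : ℕ → E) : ℕ → E
  | 0 => 0
  | k + 1 => F (xt k)

namespace IsOptimisticGradient

variable {F : E → E} {γ₁ γ₂ : ℝ} {x xt : ℕ → E}

theorem xt_eq (hOG : IsOptimisticGradient F γ₁ γ₂ x xt) (k : ℕ) :
    xt k = x k - γ₁ • prevEval F xt k := by
  cases k with
  | zero => simp [prevEval, hOG.xt_zero]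
  | succ k => exact hOG.xt_succ k

theorem x_succ_eq (hOG : IsOptimisticGradient F γ₁ γ₂ x xt) (k : ℕ) :
    x (k + 1) = x k - γ₂ • prevEval F xt (k + 1) :=
  hOG.x_succ k

theorem xt_succ_sub_xt (hOG : IsOptimisticGradient F γ₁ γ₂ x xt) (k : ℕ) :
    xt (k + 1) - xt k = -((γ₁ + γ₂) • prevEval F xt (k + 1) - γ₁ • prevEval F xt k) := by
  rw [hOG.xt_eq (k + 1), hOG.xt_eq k, hOG.x_succ_eq k]
  module

theorem norm_sub_sq_succ_le {ρ : ℝ} {xs : E} (hOG : IsOptimisticGradient F γ₁ γ₂ x xt)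
    (hstar : ∀ x, ⟪F x, x - xs⟫ ≥ -ρ * ‖F x‖ ^ 2) (hγ₂ : 0 ≤ γ₂) (hγ : 2 * ρ + γ₂ ≤ γ₁)
    (k : ℕ) :
    ‖x (k + 1) - xs‖ ^ 2 ≤ ‖x k - xs‖ ^ 2 + γ₁ * γ₂ *
      (‖prevEval F xt (k + 1) - prevEval F xt k‖ ^ 2 - ‖prevEval F xt k‖ ^ 2) := by
  have hg : ⟪prevEval F xt (k + 1), (x k - xs) - γ₁ • prevEval F xt k⟫ ≥
      -ρ * ‖prevEval F xt (k + 1)‖ ^ 2 := by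
    rw [sub_right_comm, ← hOG.xt_eq k]
    exact hstar (xt k)
  rw [hOG.x_succ_eq k, sub_right_comm]
  exact norm_sub_smul_sq_le_of_inner_ge_s17 hγ₂ hγ hg

theorem norm_prevEval_sub_sq_succ_le {L : ℝ} (hOG : IsOptimisticGradient F γ₁ γ₂ x xt)
    (hLip : ∀ x y, ‖F x - F y‖ ≤ L * ‖x - y‖) (k : ℕ) :
    ‖prevEval F xt (k + 2) - prevEval F xt (k + 1)‖ ^ 2 ≤
      L ^ 2 * (γ₂ * (γ₁ + γ₂) * ‖prevEval F xt (k + 1)‖ ^ 2 - γ₁ * γ₂ * ‖prevEval F xt k‖ ^ 2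
        + γ₁ * (γ₁ + γ₂) * ‖prevEval F xt (k + 1) - prevEval F xt k‖ ^ 2) := by
  calc ‖F (xt (k + 1)) - F (xt k)‖ ^ 2 ≤ (L * ‖xt (k + 1) - xt k‖) ^ 2 :=
        pow_le_pow_left₀ (norm_nonneg _) (hLip _ _) 2
    _ = _ := by
      rw [mul_pow, hOG.xt_succ_sub_xt, norm_neg, norm_smul_sub_smul_sq]
      ring

theorem norm_prevEval_one_sq_le {L : ℝ} {xs : E} (hOG : IsOptimisticGradient F γ₁ γ₂ x xt)
    (hLip : ∀ x y, ‖F x - F y‖ ≤ L * ‖x - y‖) (hxs : F xs = 0) :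
    ‖prevEval F xt 1 - prevEval F xt 0‖ ^ 2 ≤ L ^ 2 * ‖x 0 - xs‖ ^ 2 := by
  have h := hLip (xt 0) xs
  rw [hxs, sub_zero, hOG.xt_zero] at h
  simpa [prevEval, hOG.xt_zero, mul_pow] using pow_le_pow_left₀ (norm_nonneg _) h 2

theorem mul_sum_range_norm_sq_le {ρ L : ℝ} {xs : E} (hOG : IsOptimisticGradient F γ₁ γ₂ x xt)
    (hLip : ∀ x y, ‖F x - F y‖ ≤ L * ‖x - y‖) (hxs : F xs = 0)
    (hstar : ∀ x, ⟪F x, x - xs⟫ ≥ -ρ * ‖F x‖ ^ 2) (hρ : 0 ≤ ρ) (hγ₂ : 0 ≤ γ₂)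
    (hγ : 2 * ρ + γ₂ ≤ γ₁) (hu : L ^ 2 * (γ₁ + γ₂) ^ 2 < 1) (M : ℕ) :
    γ₁ * γ₂ * (1 - L ^ 2 * (γ₁ + γ₂) ^ 2) * ∑ k ∈ range M, ‖F (xt k)‖ ^ 2 ≤ ‖x 0 - xs‖ ^ 2 := by
  have h := mul_sum_range_le_of_og_recursion (r := fun k => ‖x k - xs‖ ^ 2)
    (n := fun k => ‖prevEval F xt k‖ ^ 2)
    (δ := fun k => ‖prevEval F xt (k + 1) - prevEval F xt k‖ ^ 2)
    (by linarith) hγ₂ hu (fun _ => by positivity)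
    (fun _ => by positivity) (fun _ => by positivity) (hOG.norm_sub_sq_succ_le hstar hγ₂ hγ)
    (hOG.norm_prevEval_sub_sq_succ_le hLip) (hOG.norm_prevEval_one_sq_le hLip hxs) (M + 1)
  simpa [sum_range_succ', prevEval] using h

end IsOptimisticGradient

theorem stmt_17_general {d : ℕ} (ρ L : ℝ) (hρ : 0 ≤ ρ) (hL : 0 < L)
    (F : EuclideanSpace ℝ (Fin d) → EuclideanSpace ℝ (Fin d))
    (hLip : ∀ x y, ‖F x - F y‖ ≤ L * ‖x - y‖)
    (xs : EuclideanSpace ℝ (Fin d)) (hxs : F xs = 0)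
    (hstar : ∀ x, ⟪F x, x - xs⟫ ≥ -ρ * ‖F x‖ ^ 2)
    (γ₁ γ₂ : ℝ)
    (hγ₂l : 0 < γ₂) (hγ₂u : γ₂ < min (1 / L - γ₁) (γ₁ - 2 * ρ))
    (x xt : ℕ → EuclideanSpace ℝ (Fin d))
    (hxt0 : xt 0 = x 0)
    (hxt : ∀ k : ℕ, xt (k + 1) = x (k + 1) - γ₁ • F (xt k))
    (hx : ∀ k : ℕ, x (k + 1) = x k - γ₂ • F (xt k)) :
    ∀ N : ℕ,
      (1 / ((N : ℝ) + 1)) * ∑ k ∈ Finset.range (N + 1), ‖F (xt k)‖ ^ 2 ≤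
        ‖x 0 - xs‖ ^ 2 /
          (γ₁ * γ₂ * (1 - L ^ 2 * (γ₁ + γ₂) ^ 2) * ((N : ℝ) + 1)) := by
  intro N
  obtain ⟨hγL, hγρ⟩ := lt_min_iff.mp hγ₂u
  have hγ₁ : 0 < γ₁ := by linarith
  have hu : L ^ 2 * (γ₁ + γ₂) ^ 2 < 1 := by
    have : L * (γ₁ + γ₂) < 1 := by rw [← lt_div_iff₀' hL]; linarith
    nlinarith [mul_pos hL (add_pos hγ₁ hγ₂l)]
  have hc : 0 < γ₁ * γ₂ * (1 - L ^ 2 * (γ₁ + γ₂) ^ 2) := by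
    have := sub_pos.mpr hu
    positivity
  have hOG : IsOptimisticGradient F γ₁ γ₂ x xt := ⟨hxt0, hxt, hx⟩
  calc (1 / ((N : ℝ) + 1)) * ∑ k ∈ range (N + 1), ‖F (xt k)‖ ^ 2
      = (γ₁ * γ₂ * (1 - L ^ 2 * (γ₁ + γ₂) ^ 2) * ∑ k ∈ range (N + 1), ‖F (xt k)‖ ^ 2) /
          (γ₁ * γ₂ * (1 - L ^ 2 * (γ₁ + γ₂) ^ 2) * ((N : ℝ) + 1)) := by
        rw [mul_div_mul_left _ _ hc.ne', one_div_mul_eq_div]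
    _ ≤ _ := div_le_div_of_nonneg_right
        (hOG.mul_sum_range_norm_sq_le hLip hxs hstar hρ hγ₂l.le (by linarith) hu (N + 1))
        (by positivity)

/-- Best-iterate `O(1/N)` rate for Optimistic Gradient under `L`-Lipschitzness
and `ρ`-star-negative comonotonicity, with `ρ < 1/(2L)`, `2ρ < γ₁ < 1/L`, and
`0 < γ₂ < min{1/L − γ₁, γ₁ − 2ρ}`:
`(1/(N+1)) ∑_{k=0}^N ‖F(x̃^k)‖² ≤ ‖x⁰ − x*‖²/(γ₁γ₂(1 − L²(γ₁+γ₂)²)(N+1))`. -/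
theorem stmt_17 {d : ℕ} (ρ L : ℝ) (hρ : 0 ≤ ρ) (hL : 0 < L)
    (F : EuclideanSpace ℝ (Fin d) → EuclideanSpace ℝ (Fin d))
    (hLip : ∀ x y, ‖F x - F y‖ ≤ L * ‖x - y‖)
    (xs : EuclideanSpace ℝ (Fin d)) (hxs : F xs = 0)
    (hstar : ∀ x, ⟪F x, x - xs⟫ ≥ -ρ * ‖F x‖ ^ 2)
    (hρL : ρ < 1 / (2 * L))
    (γ₁ γ₂ : ℝ) (hγ₁l : 2 * ρ < γ₁) (hγ₁u : γ₁ < 1 / L)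
    (hγ₂l : 0 < γ₂) (hγ₂u : γ₂ < min (1 / L - γ₁) (γ₁ - 2 * ρ))
    (x xt : ℕ → EuclideanSpace ℝ (Fin d))
    (hxt0 : xt 0 = x 0)
    (hxt : ∀ k : ℕ, xt (k + 1) = x (k + 1) - γ₁ • F (xt k))
    (hx : ∀ k : ℕ, x (k + 1) = x k - γ₂ • F (xt k)) :
    ∀ N : ℕ,
      (1 / ((N : ℝ) + 1)) * ∑ k ∈ Finset.range (N + 1), ‖F (xt k)‖ ^ 2 ≤
        ‖x 0 - xs‖ ^ 2 /
          (γ₁ * γ₂ * (1 - L ^ 2 * (γ₁ + γ₂) ^ 2) * ((N : ℝ) + 1)) :=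
  stmt_17_general ρ L hρ hL F hLip xs hxs hstar γ₁ γ₂ hγ₂l hγ₂u x xt hxt0 hxt hx
end

section
/- Let L > 0, let F : ℝ^d → ℝ^d be L-Lipschitz and ρ-negatively comonotone with ρ ≤ 5/(62L), and let (x^k), (x̃^k) be Optimistic Gradient iterates with equal stepsizes γ₁ = γ₂ = γ where 4ρ ≤ γ ≤ 10/(31L). Then for every k ≥ 1: ‖F(x^{k+1})‖² + ‖F(x^{k+1}) − F(x̃^k)‖² ≤ ‖F(x^k)‖² + ‖F(x^k) − F(x̃^{k−1})‖² − (1/100)‖F(x̃^k) − F(x̃^{k−1})‖². -/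
open RealInnerProductSpace

/-!
One OG step is analysed through the four values `a = F(x^{k+1})`, `b = F(x̃^k)`, `c = F(x^k)`,
`e = F(x̃^{k-1})`. Since `x^{k+1} - x̃^k = γ (e - b)` and `x^{k+1} - x^k = -γ b`, Lipschitz
continuity gives `‖a - b‖ ≤ (10/31) ‖b - e‖`, and comonotonicity at the pairs `(x^{k+1}, x̃^k)` and
`(x^{k+1}, x^k)`, divided by `γ ≥ 4ρ`, gives two inner-product bounds with constant `1/4`. The
descent of the potential `‖F(x^k)‖² + ‖F(x^k) - F(x̃^{k-1})‖²` is then a purely quadratic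
consequence of these three inequalities, certified by a sum of squares.
-/

section InnerProductSpace

variable {E : Type*} [NormedAddCommGroup E] [InnerProductSpace ℝ E]

theorem potential_le_of_inner_bounds (a b c e : E)
    (hab : ‖a - b‖ ^ 2 ≤ (100 / 961) * ‖b - e‖ ^ 2)
    (hb : ⟪a - b, e - b⟫ ≥ -(1 / 4) * ‖a - b‖ ^ 2)
    (hc : ⟪a - c, b⟫ ≤ (1 / 4) * ‖a - c‖ ^ 2) :
    ‖a‖ ^ 2 + ‖a - b‖ ^ 2 ≤ ‖c‖ ^ 2 + ‖c - e‖ ^ 2 - (1 / 100) * ‖b - e‖ ^ 2 := by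
  -- the conclusion is a nonnegative combination of the hypotheses and these three squares
  have s₁ : 0 ≤ ‖(7 : ℝ) • a - (11 : ℝ) • b + (10 : ℝ) • c - (6 : ℝ) • e‖ ^ 2 := by positivity
  have s₂ : 0 ≤ ‖(42743 : ℝ) • b - (144150 : ℝ) • c + (101407 : ℝ) • e‖ ^ 2 := by positivity
  have s₃ : 0 ≤ ‖c - e‖ ^ 2 := by positivity
  have := real_inner_comm a b
  have := real_inner_comm a c
  have := real_inner_comm a e
  have := real_inner_comm b c
  have := real_inner_comm b e
  have := real_inner_comm c e
  simp only [← real_inner_self_eq_norm_sq, inner_sub_left, inner_sub_right,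
    inner_add_left, inner_add_right, real_inner_smul_left, real_inner_smul_right]
    at hab hb hc s₁ s₂ s₃ ⊢
  linarith

theorem inner_ge_neg_quarter_of_inner_smul_ge {ρ γ : ℝ} (hγ : 0 < γ) (hργ : 4 * ρ ≤ γ)
    {u v : E} (h : ⟪u, γ • v⟫ ≥ -ρ * ‖u‖ ^ 2) : ⟪u, v⟫ ≥ -(1 / 4) * ‖u‖ ^ 2 := by
  rw [real_inner_smul_right] at h
  have : 0 ≤ (γ / 4 - ρ) * ‖u‖ ^ 2 := mul_nonneg (by linarith) (sq_nonneg _)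
  nlinarith

theorem optimisticGradient_step_potential_le {ρ L γ : ℝ} (hρ : 0 ≤ ρ) (hL : 0 < L)
    {F : E → E} (hLip : ∀ x y, ‖F x - F y‖ ≤ L * ‖x - y‖)
    (hcomon : ∀ x y, ⟪F x - F y, x - y⟫ ≥ -ρ * ‖F x - F y‖ ^ 2)
    (hγl : 4 * ρ ≤ γ) (hγu : γ ≤ 10 / (31 * L))
    {y y' z z₀ : E} (hz : z = y - γ • F z₀) (hy' : y' = y - γ • F z) :
    ‖F y'‖ ^ 2 + ‖F y' - F z‖ ^ 2 ≤
      ‖F y‖ ^ 2 + ‖F y - F z₀‖ ^ 2 - (1 / 100) * ‖F z - F z₀‖ ^ 2 := by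
  rcases (show 0 ≤ γ by linarith).eq_or_lt with rfl | hγ
  · simp only [zero_smul, sub_zero] at hz hy'
    subst z y'
    rw [sub_self, norm_zero]
    nlinarith [sq_nonneg ‖F y - F z₀‖]
  have hy'z : y' - z = γ • (F z₀ - F z) :=
    calc y' - z = (y - γ • F z) - (y - γ • F z₀) := by rw [← hz, ← hy']
      _ = γ • (F z₀ - F z) := by rw [smul_sub]; abel
  have hy'y : y' - y = γ • -F z := by rw [hy', smul_neg]; abel
  have hLγ : L * γ ≤ 10 / 31 := by
    rw [le_div_iff₀ (by positivity)] at hγu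
    linarith
  apply potential_le_of_inner_bounds
  · have hnorm : ‖F y' - F z‖ ≤ 10 / 31 * ‖F z - F z₀‖ :=
      calc ‖F y' - F z‖ ≤ L * ‖y' - z‖ := hLip y' z
        _ = L * γ * ‖F z - F z₀‖ := by
          rw [hy'z, norm_smul, Real.norm_of_nonneg hγ.le, norm_sub_rev, mul_assoc]
        _ ≤ 10 / 31 * ‖F z - F z₀‖ := by gcongr
    calc ‖F y' - F z‖ ^ 2 ≤ (10 / 31 * ‖F z - F z₀‖) ^ 2 := by gcongr
      _ = 100 / 961 * ‖F z - F z₀‖ ^ 2 := by ring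
  · exact inner_ge_neg_quarter_of_inner_smul_ge hγ hγl (hy'z ▸ hcomon y' z)
  · have := inner_ge_neg_quarter_of_inner_smul_ge hγ hγl (hy'y ▸ hcomon y' y)
    rw [inner_neg_right] at this
    linarith

end InnerProductSpace

theorem stmt_18_general {d : ℕ} (ρ L : ℝ) (hρ : 0 ≤ ρ) (hL : 0 < L)
    (F : EuclideanSpace ℝ (Fin d) → EuclideanSpace ℝ (Fin d))
    (hLip : ∀ x y, ‖F x - F y‖ ≤ L * ‖x - y‖)
    (hcomon : ∀ x y, ⟪F x - F y, x - y⟫ ≥ -ρ * ‖F x - F y‖ ^ 2)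
    (γ : ℝ) (hγl : 4 * ρ ≤ γ) (hγu : γ ≤ 10 / (31 * L))
    (x xt : ℕ → EuclideanSpace ℝ (Fin d))
    (hxt : ∀ k : ℕ, xt (k + 1) = x (k + 1) - γ • F (xt k))
    (hx : ∀ k : ℕ, x (k + 1) = x k - γ • F (xt k)) :
    ∀ k : ℕ, 1 ≤ k →
      ‖F (x (k + 1))‖ ^ 2 + ‖F (x (k + 1)) - F (xt k)‖ ^ 2 ≤
        ‖F (x k)‖ ^ 2 + ‖F (x k) - F (xt (k - 1))‖ ^ 2
          - (1 / 100) * ‖F (xt k) - F (xt (k - 1))‖ ^ 2 := by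
  rintro (_ | m) hk
  · omega
  exact optimisticGradient_step_potential_le hρ hL hLip hcomon hγl hγu (hxt m) (hx (m + 1))

/-- Potential decrease for Optimistic Gradient with equal stepsizes
`4ρ ≤ γ ≤ 10/(31L)` under `L`-Lipschitzness and `ρ`-negative comonotonicity
with `ρ ≤ 5/(62L)`: for all `k ≥ 1`,
`‖F(x^{k+1})‖² + ‖F(x^{k+1}) − F(x̃^k)‖² ≤
  ‖F(x^k)‖² + ‖F(x^k) − F(x̃^{k−1})‖² − (1/100)‖F(x̃^k) − F(x̃^{k−1})‖²`. -/
theorem stmt_18 {d : ℕ} (ρ L : ℝ) (hρ : 0 ≤ ρ) (hL : 0 < L)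
    (F : EuclideanSpace ℝ (Fin d) → EuclideanSpace ℝ (Fin d))
    (hLip : ∀ x y, ‖F x - F y‖ ≤ L * ‖x - y‖)
    (hcomon : ∀ x y, ⟪F x - F y, x - y⟫ ≥ -ρ * ‖F x - F y‖ ^ 2)
    (hρL : ρ ≤ 5 / (62 * L))
    (γ : ℝ) (hγl : 4 * ρ ≤ γ) (hγu : γ ≤ 10 / (31 * L))
    (x xt : ℕ → EuclideanSpace ℝ (Fin d))
    (hxt0 : xt 0 = x 0)
    (hxt : ∀ k : ℕ, xt (k + 1) = x (k + 1) - γ • F (xt k))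
    (hx : ∀ k : ℕ, x (k + 1) = x k - γ • F (xt k)) :
    ∀ k : ℕ, 1 ≤ k →
      ‖F (x (k + 1))‖ ^ 2 + ‖F (x (k + 1)) - F (xt k)‖ ^ 2 ≤
        ‖F (x k)‖ ^ 2 + ‖F (x k) - F (xt (k - 1))‖ ^ 2
          - (1 / 100) * ‖F (xt k) - F (xt (k - 1))‖ ^ 2 :=
  stmt_18_general ρ L hρ hL F hLip hcomon γ hγl hγu x xt hxt hx
end
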